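/- Let S be a Cohen–Macaulay Noetherian ring, let I be an unmixed ideal of S of height c that is generically a complete intersection, let m be a positive integer, and let t be a positive integer. If I^(m) ⊆ I^m : F_c(I)^t (equivalently, F_c(I)^t ⊆ I^m : I^(m) = ann_S(I^(m)/I^m)), then I^(m) = I^m : F_c(I)^t, where F_c(I) is the c-th Fitting ideal of I regarded as an S-module. -/

import Mathlib

open Ideal Filter

universe u

/-- The `m`-th symbolic power of an ideal `I`: the intersection, over all associated primes `p`
of `S ⧸ I`, of the contractions of `I ^ m` extended to the localization at `p`. -/
noncomputable def symbolicPower {S : Type*} [CommRing S] (I : Ideal S) (m : ℕ) : Ideal S :=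
  ⨅ p : associatedPrimes S (S ⧸ I),
    letI : p.1.IsPrime := p.2.isPrime
    ((I ^ m).map (algebraMap S (Localization.AtPrime p.1))).comap
      (algebraMap S (Localization.AtPrime p.1))

/-- The height of an ideal: the infimum of the heights of the primes containing it. -/
noncomputable def idealHeight {S : Type*} [CommRing S] (I : Ideal S) : ℕ∞ :=
  ⨅ (p : PrimeSpectrum S) (_ : I ≤ p.asIdeal), Order.height p

/-- An ideal is unmixed of height `c` if it has height `c` and every associated prime of `S ⧸ I`
has height `c`. -/
def IsUnmixedOfHeight {S : Type*} [CommRing S] (I : Ideal S) (c : ℕ) : Prop :=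
  idealHeight I = (c : ℕ∞) ∧ ∀ p ∈ associatedPrimes S (S ⧸ I), idealHeight p = (c : ℕ∞)

/-- An ideal `I` is generically a complete intersection if, for every associated prime `p` of
`S ⧸ I`, the extension of `I` to the localization at `p` is generated by a regular sequence. -/
def IsGenericallyCI {S : Type*} [CommRing S] (I : Ideal S) : Prop :=
  ∀ p : associatedPrimes S (S ⧸ I),
    letI : p.1.IsPrime := p.2.isPrime
    ∃ rs : List (Localization.AtPrime p.1),
      RingTheory.Sequence.IsRegular (Localization.AtPrime p.1) rs ∧
      Ideal.ofList rs = I.map (algebraMap S (Localization.AtPrime p.1))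

/-- The depth of a local ring: the supremum of lengths of regular sequences contained in the
maximal ideal. -/
noncomputable def localDepth (R : Type*) [CommRing R] [IsLocalRing R] : ℕ∞ :=
  ⨆ rs : {rs : List R // (∀ x ∈ rs, x ∈ IsLocalRing.maximalIdeal R) ∧
      RingTheory.Sequence.IsRegular R rs}, (rs.1.length : ℕ∞)

/-- A ring is Cohen-Macaulay if the localization at every prime ideal has depth equal to its
Krull dimension. -/
def IsCohenMacaulayRing (S : Type*) [CommRing S] : Prop :=
  ∀ (p : Ideal S) (_hp : p.IsPrime),
    (localDepth (Localization.AtPrime p) : WithBot ℕ∞) = ringKrullDim (Localization.AtPrime p)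

/-- The `j`-th Fitting ideal of a module `M`: the ideal generated by the `(n - j)`-minors of a
presentation matrix coming from any generating family of size `n`. -/
noncomputable def fittingIdeal (S : Type*) [CommRing S] (M : Type*) [AddCommGroup M]
    [Module S M] (j : ℕ) : Ideal S :=
  ⨆ (n : ℕ) (g : Fin n → M) (_ : Submodule.span S (Set.range g) = ⊤),
    Ideal.span { d : S | ∃ (r : Fin (n - j) → Fin n → S) (ι : Fin (n - j) → Fin n),
      (∀ k, ∑ i, r k i • g i = 0) ∧ d = Matrix.det (Matrix.of fun k l => r l (ι k)) }

/-!
One inclusion is the hypothesis. For the other it suffices that `F_c(I)` lies in no associated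
prime `p` of `S/I`: then some `d ∈ F_c(I)^t` is a unit in `S_p`, so `z ∈ I^m : F_c(I)^t` gives
`z ∈ I^m S_p ∩ S`. At such a `p`, `I S_p` is generated by a regular sequence in the maximal ideal
of `S_p`; since `S_p` is Cohen–Macaulay its length is at most `depth S_p = dim S_p = ht p = c`.
So `I` is generated at `p` by at most `c` elements, and a presentation of `I` built from these
and a global generating set has an `(n - c)`-minor that is a unit at `p`.
-/

section Fitting

variable {S : Type*} [CommRing S] {M : Type*} [AddCommGroup M] [Module S M]

theorem det_mem_fittingIdeal {n j : ℕ} {g : Fin n → M}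
    (hg : Submodule.span S (Set.range g) = ⊤) (r : Fin (n - j) → Fin n → S)
    (hr : ∀ k, ∑ i, r k i • g i = 0) (ι : Fin (n - j) → Fin n) :
    (Matrix.of fun k l => r l (ι k)).det ∈ fittingIdeal S M j :=
  Submodule.mem_iSup_of_mem n <| Submodule.mem_iSup_of_mem g <| Submodule.mem_iSup_of_mem hg <|
    Ideal.subset_span ⟨r, ι, hr, rfl⟩

theorem exists_mem_fittingIdeal_of_forall_smul_eq_sum [Module.Finite S M]
    (U : Submonoid S) {s c : ℕ} (hsc : s ≤ c) (x : Fin s → M)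
    (hx : ∀ y : M, ∃ v ∈ U, ∃ e : Fin s → S, v • y = ∑ j, e j • x j) :
    ∃ d ∈ fittingIdeal S M c, d ∈ U := by
  obtain ⟨k, g, hg⟩ := Module.Finite.exists_fin (R := S) (M := M)
  choose v hvU e he using fun i => hx (g i)
  let col : Fin (s + k - c) → Fin k := Fin.castLE (by omega)
  have hcol : Function.Injective col := Fin.castLE_injective _
  -- The relations `v i • g i - ∑ j, e i j • x j = 0` for `s + k - c` of the `i`: their minor on
  -- the columns of those `g i` is diagonal with entries `v i ∈ U`.
  let r : Fin (s + k - c) → Fin (s + k) → S := fun l =>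
    Fin.append (-e (col l)) (Pi.single (col l) (v (col l)))
  have hr : ∀ l, ∑ i, r l i • Fin.append x g i = 0 := by
    intro l
    simp [r, Fin.sum_univ_add, Pi.single_apply, ite_smul, he]
  have hdiag : (Matrix.of fun a b => r b (Fin.natAdd s (col a))) =
      Matrix.diagonal (v ∘ col) := by
    ext a b
    simp only [r, Matrix.of_apply, Fin.append_right, Pi.single_apply, hcol.eq_iff,
      Matrix.diagonal_apply, Function.comp_apply]
    split_ifs with h <;> simp [h]
  refine ⟨_, det_mem_fittingIdeal ?_ r hr (Fin.natAdd s ∘ col), ?_⟩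
  · exact eq_top_iff.2 (hg ▸ Submodule.span_mono (by
      rintro _ ⟨i, rfl⟩; exact ⟨Fin.natAdd s i, Fin.append_right x g i⟩))
  · rw [Function.comp_def, hdiag, Matrix.det_diagonal]
    exact prod_mem fun a _ => hvU (col a)

end Fitting

theorem exists_forall_smul_eq_sum_of_map_eq_span {S R : Type*} [CommRing S] [CommRing R]
    [Algebra S R] (U : Submonoid S) [IsLocalization U R] {I : Ideal S} {s : ℕ} {f : Fin s → R}
    (hf : I.map (algebraMap S R) = Ideal.span (Set.range f)) :
    ∃ x : Fin s → I, ∀ y : I, ∃ v ∈ U, ∃ e : Fin s → S, v • y = ∑ j, e j • x j := by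
  have hfI : ∀ j, f j ∈ I.map (algebraMap S R) := fun j => hf ▸ Ideal.subset_span ⟨j, rfl⟩
  choose a ha using fun j => (IsLocalization.mem_map_algebraMap_iff U R).1 (hfI j)
  set J : Ideal S := Ideal.span (Set.range fun j => ((a j).1 : S))
  have hIJ : I.map (algebraMap S R) ≤ J.map (algebraMap S R) := by
    rw [hf, Ideal.span_le]
    rintro _ ⟨j, rfl⟩
    rw [SetLike.mem_coe, ← Ideal.mul_unit_mem_iff_mem _ (IsLocalization.map_units R (a j).2), ha j]
    exact Ideal.mem_map_of_mem _ (Ideal.subset_span ⟨j, rfl⟩)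
  refine ⟨fun j => (a j).1, fun y => ?_⟩
  obtain ⟨⟨⟨b, hbJ⟩, u⟩, hb⟩ :=
    (IsLocalization.mem_map_algebraMap_iff U R).1 (hIJ (Ideal.mem_map_of_mem _ y.2))
  rw [← map_mul] at hb
  obtain ⟨w, hw⟩ := (IsLocalization.eq_iff_exists U R).1 hb
  obtain ⟨e, rfl⟩ := (Submodule.mem_span_range_iff_exists_fun S).1 hbJ
  refine ⟨w * u, mul_mem w.2 u.2, fun j => w * e j, Subtype.ext ?_⟩
  calc ((w * u : S) • y : S) = w * (y * u) := by simp only [smul_eq_mul]; ring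
    _ = w * ∑ j, e j * (a j).1 := hw
    _ = _ := by simp [Finset.mul_sum, mul_assoc]

theorem not_fittingIdeal_le_of_map_eq_ofList {S : Type*} [CommRing S] [IsNoetherianRing S]
    {I p : Ideal S} [p.IsPrime] {c : ℕ} {rs : List (Localization.AtPrime p)}
    (hrs : Ideal.ofList rs = I.map (algebraMap S (Localization.AtPrime p)))
    (hlen : rs.length ≤ c) : ¬fittingIdeal S I c ≤ p := by
  rw [Ideal.ofList, ← Set.range_list_get] at hrs
  obtain ⟨x, hx⟩ := exists_forall_smul_eq_sum_of_map_eq_span p.primeCompl hrs.symm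
  obtain ⟨d, hdF, hdp⟩ := exists_mem_fittingIdeal_of_forall_smul_eq_sum p.primeCompl
    hlen x hx
  exact fun hFp => hdp (hFp hdF)

theorem idealHeight_eq_height {S : Type*} [CommRing S] (p : Ideal S) [hp : p.IsPrime] :
    idealHeight p = p.height := by
  rw [show p.height = Order.height (⟨p, hp⟩ : PrimeSpectrum S) from
    PrimeSpectrum.height_eq_orderHeight ⟨p, hp⟩]
  exact le_antisymm (iInf₂_le (⟨p, hp⟩ : PrimeSpectrum S) le_rfl)
    (le_iInf₂ fun q (hq : p ≤ q.asIdeal) => Order.height_mono (α := PrimeSpectrum S) hq)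

theorem IsCohenMacaulayRing.length_le_height {S : Type*} [CommRing S]
    (hCM : IsCohenMacaulayRing S) (p : Ideal S) [p.IsPrime]
    {rs : List (Localization.AtPrime p)}
    (hmax : Ideal.ofList rs ≤ IsLocalRing.maximalIdeal (Localization.AtPrime p))
    (hreg : RingTheory.Sequence.IsRegular (Localization.AtPrime p) rs) :
    (rs.length : ℕ∞) ≤ p.height := by
  have hdepth : (rs.length : ℕ∞) ≤ localDepth (Localization.AtPrime p) :=
    le_iSup_of_le ⟨rs, fun x hx => hmax (Ideal.subset_span hx), hreg⟩ le_rfl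
  have := WithBot.coe_le_coe.2 hdepth
  rwa [hCM p ‹_›, IsLocalization.AtPrime.ringKrullDim_eq_height p, WithBot.coe_le_coe] at this

theorem le_of_mem_associatedPrimes_quotient {S : Type*} [CommRing S] {I p : Ideal S}
    (hp : p ∈ associatedPrimes S (S ⧸ I)) : I ≤ p := by
  simpa [Submodule.annihilator_top, Ideal.annihilator_quotient] using
    IsAssociatedPrime.annihilator_le hp

theorem colon_le_symbolicPower {S : Type*} [CommRing S] {I J : Ideal S} (m : ℕ)
    (hJ : ∀ p ∈ associatedPrimes S (S ⧸ I), ¬J ≤ p) :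
    (I ^ m).colon (J : Set S) ≤ symbolicPower I m := by
  intro z hz
  rw [symbolicPower, Submodule.mem_iInf]
  rintro ⟨p, hp⟩
  have := hp.isPrime
  obtain ⟨d, hdJ, hdp⟩ := Set.not_subset.1 (hJ p hp)
  rw [Ideal.mem_comap, ← Ideal.mul_unit_mem_iff_mem _
    (IsLocalization.map_units (Localization.AtPrime p) (⟨d, hdp⟩ : p.primeCompl)), ← map_mul]
  exact Ideal.mem_map_of_mem _ (Submodule.mem_colon.1 hz d hdJ)

theorem stmt14_general {S : Type u} [CommRing S] [IsNoetherianRing S] (hCM : IsCohenMacaulayRing S)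
    (I : Ideal S) (c : ℕ) (hunm : IsUnmixedOfHeight I c) (hgci : IsGenericallyCI I)
    (m t : ℕ)
    (hle : symbolicPower I m ≤ Submodule.colon (I ^ m) ((fittingIdeal S ↥I c ^ t : Ideal S) : Set S)) :
    symbolicPower I m = Submodule.colon (I ^ m) ((fittingIdeal S ↥I c ^ t : Ideal S) : Set S) := by
  refine le_antisymm hle (colon_le_symbolicPower m fun p hp hFp => ?_)
  have := hp.isPrime
  obtain ⟨rs, hreg, hrs⟩ := hgci ⟨p, hp⟩
  have hmax : Ideal.ofList rs ≤ IsLocalRing.maximalIdeal (Localization.AtPrime p) :=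
    hrs ▸ Localization.AtPrime.map_eq_maximalIdeal (I := p) ▸
      Ideal.map_mono (le_of_mem_associatedPrimes_quotient hp)
  have hlen := hCM.length_le_height p hmax hreg
  rw [← idealHeight_eq_height, hunm.2 p hp, Nat.cast_le] at hlen
  exact not_fittingIdeal_le_of_map_eq_ofList hrs hlen (this.le_of_pow_le hFp)

theorem stmt14 {S : Type u} [CommRing S] [IsNoetherianRing S] (hCM : IsCohenMacaulayRing S)
    (I : Ideal S) (c : ℕ) (hunm : IsUnmixedOfHeight I c) (hgci : IsGenericallyCI I)
    (m t : ℕ) (hm : 0 < m) (ht : 0 < t)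
    (hle : symbolicPower I m ≤ Submodule.colon (I ^ m) ((fittingIdeal S ↥I c ^ t : Ideal S) : Set S)) :
    symbolicPower I m = Submodule.colon (I ^ m) ((fittingIdeal S ↥I c ^ t : Ideal S) : Set S) :=
  stmt14_general hCM I c hunm hgci m t hle
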